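/- Consider any play of the erase-repetition game over a set S in which every symbol appended by Ann differs from each of the last three symbols of the current sequence before her move (or from all symbols of the current sequence if it has fewer than three terms), while Ben plays arbitrarily. Then at no move of this play does a repetition of size 2 or of size 3 occur; moreover, every repetition created by a move of Ann has size at least 4 (so all repetitions occurring in the play have size 1 or size at least 4, and those of size 1 are created only by Ben). -/

import Mathlib

/-- The last `2*h` terms of `l` form a repetition of size `h` (`h ≥ 1`),
i.e. `l` has a suffix of the form `x₁…x_h x₁…x_h`. -/
def SuffixRep {S : Type*} (l : List S) (h : ℕ) : Prop :=
  1 ≤ h ∧ 2 * h ≤ l.length ∧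
    (l.drop (l.length - 2 * h)).take h = l.drop (l.length - h)

instance {S : Type*} [DecidableEq S] (l : List S) (h : ℕ) :
    Decidable (SuffixRep l h) := by
  unfold SuffixRep; infer_instance

/-- The size of the repetition created by appending the last symbol of `l`,
i.e. the smallest `h ≥ 1` such that the last `2*h` terms of `l` form a
repetition of size `h` (`0` if there is no repeated suffix). -/
def minRep {S : Type*} [DecidableEq S] (l : List S) : ℕ :=
  ((((List.range (l.length + 1)).filter fun h => decide (SuffixRep l h))).head?).getD 0

/-- Erase the second half of the shortest repeated suffix of `l`
(if `l` has no repeated suffix, `l` is left unchanged). -/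
def eraseRep {S : Type*} [DecidableEq S] (l : List S) : List S :=
  l.take (l.length - minRep l)

/-- The current sequence after `j` moves of a play of the erase-repetition game
in which the symbol appended at the `(j+1)`-st move is `x j`: each appended
symbol creating a repetition causes the second half of the shortest repeated
suffix to be erased immediately. -/
def statesOf {S : Type*} [DecidableEq S] (x : ℕ → S) : ℕ → List S
  | 0 => []
  | j + 1 => eraseRep (statesOf x j ++ [x j])

/-!
Appending `a` creates a repetition of size `h` only if `a` equals the symbol `h` places from the
end, so a symbol avoiding the last three creates no repetition of size at most 3. If it creates
one of size `h ≥ 4`, erasing its second half leaves the last `h` symbols unchanged; hence after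
Ann's move the last symbol still differs from the three before it. A repetition of size 2 or 3
created by Ben's next symbol would force the last symbol before his move to equal the one 2 or 3
places before it.
-/

section

variable {S : Type*}

theorem SuffixRep.getElem?_reverse_add {l : List S} {h i : ℕ} (hr : SuffixRep l h)
    (hi : i < h) : l.reverse[i + h]? = l.reverse[i]? := by
  obtain ⟨-, hlen, heq⟩ := hr
  have e := congrArg (fun t : List S => t[h - 1 - i]?) heq
  simp only [List.getElem?_take, List.getElem?_drop, if_pos (show h - 1 - i < h by omega)] at e
  rw [List.getElem?_reverse (by omega), List.getElem?_reverse (by omega)]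
  convert e using 2 <;> omega

theorem SuffixRep.getElem?_reverse_take {l : List S} {h i : ℕ} (hr : SuffixRep l h)
    (hi : i < h) : (l.take (l.length - h)).reverse[i]? = l.reverse[i]? := by
  have hlen := hr.2.1
  rw [← hr.getElem?_reverse_add hi, List.getElem?_reverse (by simp; omega),
    List.getElem?_reverse (by omega), List.getElem?_take_of_lt (by simp; omega)]
  congr 1
  simp only [List.length_take]
  omega

theorem minRep_eq_zero_or_suffixRep [DecidableEq S] (l : List S) :
    minRep l = 0 ∨ SuffixRep l (minRep l) := by
  unfold minRep
  cases hl : (List.range (l.length + 1)).filter (fun h => decide (SuffixRep l h)) with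
  | nil => exact Or.inl rfl
  | cons a as =>
    have ha := List.of_mem_filter (hl ▸ List.mem_cons_self : a ∈ _)
    exact Or.inr (by simpa using ha)

theorem getElem?_reverse_eraseRep [DecidableEq S] {l : List S} {i : ℕ}
    (hi : minRep l = 0 ∨ i < minRep l) : (eraseRep l).reverse[i]? = l.reverse[i]? := by
  unfold eraseRep
  rcases minRep_eq_zero_or_suffixRep l with h0 | hr
  · rw [h0, Nat.sub_zero, List.take_length]
  · exact hr.getElem?_reverse_take (hi.resolve_left (by have := hr.1; omega))

theorem mem_take_of_getElem?_reverse_concat_eq {s : List S} {a : S} {h n : ℕ}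
    (e : (s ++ [a]).reverse[h]? = (s ++ [a]).reverse[0]?) (h1 : 1 ≤ h) (hn : h ≤ n) :
    a ∈ s.reverse.take n := by
  rw [List.reverse_concat, show h = h - 1 + 1 by omega] at e
  refine List.mem_of_getElem? (i := h - 1) ?_
  rw [List.getElem?_take_of_lt (by omega)]
  simpa using e

theorem four_le_of_suffixRep_append {s : List S} {a : S} {h : ℕ}
    (ha : a ∉ s.reverse.take 3) (hr : SuffixRep (s ++ [a]) h) : 4 ≤ h := by
  by_contra! hh
  exact ha (mem_take_of_getElem?_reverse_concat_eq
    (by simpa using hr.getElem?_reverse_add hr.1) hr.1 (by omega))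

theorem minRep_append_eq_zero_or_four_le [DecidableEq S] {s : List S} {a : S}
    (ha : a ∉ s.reverse.take 3) : minRep (s ++ [a]) = 0 ∨ 4 ≤ minRep (s ++ [a]) :=
  (minRep_eq_zero_or_suffixRep _).imp_right (four_le_of_suffixRep_append ha)

theorem eq_one_or_four_le_of_suffixRep_eraseRep_append [DecidableEq S] {s : List S} {a b : S}
    {h : ℕ} (ha : a ∉ s.reverse.take 3) (hr : SuffixRep (eraseRep (s ++ [a]) ++ [b]) h) :
    h = 1 ∨ 4 ≤ h := by
  have h1 := hr.1
  by_contra! hh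
  obtain ⟨hne, hlt⟩ := hh
  have e := hr.getElem?_reverse_add (i := 1) (by omega)
  have hkept : ∀ i ≤ 3, (eraseRep (s ++ [a])).reverse[i]? = (s ++ [a]).reverse[i]? := by
    intro i hi
    exact getElem?_reverse_eraseRep
      ((minRep_append_eq_zero_or_four_le ha).imp_right fun h4 => by omega)
  rw [List.reverse_concat, show 1 + h = h + 1 by omega, List.getElem?_cons_succ,
    List.getElem?_cons_succ, hkept h (by omega), hkept 0 (by omega)] at e
  exact ha (mem_take_of_getElem?_reverse_concat_eq e (by omega) (by omega))

end

theorem erase_game_ann_avoids_last_three {S : Type*} [DecidableEq S] (x : ℕ → S)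
    (hAnn : ∀ j, j % 2 = 0 → x j ∉ (statesOf x j).reverse.take 3) :
    (∀ j, minRep (statesOf x j ++ [x j]) ≠ 2 ∧ minRep (statesOf x j ++ [x j]) ≠ 3) ∧
    (∀ j, j % 2 = 0 →
      minRep (statesOf x j ++ [x j]) = 0 ∨ 4 ≤ minRep (statesOf x j ++ [x j])) := by
  have hAnnMove (j : ℕ) (hj : j % 2 = 0) :
      minRep (statesOf x j ++ [x j]) = 0 ∨ 4 ≤ minRep (statesOf x j ++ [x j]) :=
    minRep_append_eq_zero_or_four_le (hAnn j hj)
  refine ⟨fun j => ?_, hAnnMove⟩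
  rcases Nat.mod_two_eq_zero_or_one j with hj | hj
  · have := hAnnMove j hj
    omega
  obtain ⟨k, rfl⟩ : ∃ k, j = k + 1 := ⟨j - 1, by omega⟩
  rcases minRep_eq_zero_or_suffixRep (statesOf x (k + 1) ++ [x (k + 1)]) with h0 | hrep
  · omega
  have := eq_one_or_four_le_of_suffixRep_eraseRep_append (hAnn k (by omega)) hrep
  omega
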